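/- Let T₁,…,T_d be a commuting tuple of bounded operators on a complex Hilbert space H which is essentially normal and such that T₁H + ⋯ + T_dH is a closed subspace of finite codimension in H. Let M be a closed subspace with {0} ≠ M ≠ H and T_kM ⊆ M for all k, and let P be the orthogonal projection onto M. Then the restricted tuple (T_k|_M) on M is essentially normal if and only if the commutator PT_k − T_kP is a compact operator for every k = 1,…,d. -/

import Mathlib

set_option synthInstance.maxHeartbeats 1000000
set_option maxHeartbeats 1000000

open ContinuousLinearMap
open scoped InnerProductSpace

/-- The restriction of a continuous linear operator to an invariant submodule. -/
noncomputable def clmRestrict {E : Type*} [NormedAddCommGroup E] [InnerProductSpace ℂ E]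
    [CompleteSpace E] (T : E →L[ℂ] E) (U : Submodule ℂ E)
    (h : ∀ x ∈ U, T x ∈ U) : U →L[ℂ] U :=
  { toLinearMap := (T : E →ₗ[ℂ] E).restrict h
    cont := Continuous.subtype_mk (T.continuous.comp continuous_subtype_val) _ }

/-- A tuple `T` of (commuting) operators is *essentially normal* if all of the
self-commutators `T j (T k)* − (T k)* T j` are compact. -/
def EssNormal {d : ℕ} {F : Type*} [NormedAddCommGroup F] [InnerProductSpace ℂ F]
    [CompleteSpace F] (T : Fin d → F →L[ℂ] F) : Prop :=
  ∀ j k, IsCompactOperator ⇑(T j ∘L adjoint (T k) - adjoint (T k) ∘L T j)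

/-- Essential normality of the restriction of a tuple of operators to a closed
invariant subspace `U` (the Hilbert submodule `U`). -/
def EssNormalOn {E : Type*} [NormedAddCommGroup E] [InnerProductSpace ℂ E]
    [CompleteSpace E] {d : ℕ} (T : Fin d → E →L[ℂ] E) (U : Submodule ℂ E)
    (hU : IsClosed (U : Set E)) (hinv : ∀ k, ∀ x ∈ U, T k x ∈ U) : Prop :=
  haveI : CompleteSpace U := hU.completeSpace_coe
  EssNormal (fun k => clmRestrict (T k) U (hinv k))

/-- The orthogonal projection onto a closed subspace, as an operator on the ambient space. -/
noncomputable def projOf {E : Type*} [NormedAddCommGroup E] [InnerProductSpace ℂ E]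
    [CompleteSpace E] (U : Submodule ℂ E) (hU : IsClosed (U : Set E)) : E →L[ℂ] E :=
  haveI : CompleteSpace U := hU.completeSpace_coe
  U.subtypeL ∘L U.orthogonalProjectionOnto

/-- The compression of a tuple of operators to the orthogonal complement of a
submodule `M`; this is the coordinate tuple of the quotient Hilbert module `E/M`. -/
noncomputable def compressPerp {E : Type*} [NormedAddCommGroup E] [InnerProductSpace ℂ E]
    [CompleteSpace E] {d : ℕ} (T : Fin d → E →L[ℂ] E) (M : Submodule ℂ E) :
    Fin d → ↥(Mᗮ) →L[ℂ] ↥(Mᗮ) :=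
  fun k => (Mᗮ).orthogonalProjectionOnto ∘L T k ∘L (Mᗮ).subtypeL

section AuxLemmas

variable {E : Type*} [NormedAddCommGroup E] [InnerProductSpace ℂ E] [CompleteSpace E]
variable {F : Type*} [NormedAddCommGroup F] [InnerProductSpace ℂ F] [CompleteSpace F]

/-- If `S*S` is compact then `S` is compact. -/
lemma isCompactOperator_of_adjoint_comp (S : E →L[ℂ] F)
    (h : IsCompactOperator ⇑(adjoint S ∘L S)) : IsCompactOperator ⇑S := by
  rw [isCompactOperator_iff_exists_mem_nhds_image_subset_compact]
  refine ⟨Metric.closedBall 0 1, Metric.closedBall_mem_nhds _ one_pos,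
    closure (⇑S '' Metric.closedBall 0 1), ?_, subset_closure⟩
  refine TotallyBounded.isCompact_of_isClosed (TotallyBounded.closure ?_) isClosed_closure
  -- the image of the ball under `S*S` is totally bounded
  have hTB : TotallyBounded (⇑(adjoint S ∘L S) '' Metric.closedBall 0 1) := by
    obtain ⟨K, hK, hsub⟩ :=
      h.image_subset_compact_of_bounded (f := ((adjoint S ∘L S) : E →ₗ[ℂ] E))
        (Metric.isBounded_closedBall (x := (0 : E)) (r := 1))
    exact hK.totallyBounded.subset hsub
  rw [Metric.totallyBounded_iff]
  intro ε hε
  obtain ⟨t, hts, htf, hcover⟩ := totallyBounded_iff_subset.1 hTB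
      {p | dist p.1 p.2 < ε ^ 2 / 2} (Metric.dist_mem_uniformity (by positivity))
  choose! g hgB hgE using fun y (hy : y ∈ t) => hts hy
  refine ⟨⇑S '' (g '' t), ((htf.image g).image _), ?_⟩
  rintro z ⟨x, hxB, rfl⟩
  obtain ⟨y, hy, hxy⟩ := Set.mem_iUnion₂.1 (hcover ⟨x, hxB, rfl⟩)
  have hxy' : ‖(adjoint S ∘L S) x - (adjoint S ∘L S) (g y)‖ < ε ^ 2 / 2 := by
    have := hxy
    simp only [Set.mem_setOf_eq] at this
    rwa [dist_eq_norm, ← hgE y hy] at this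
  have hx2 : ‖x - g y‖ ≤ 2 := by
    have h1 : ‖x‖ ≤ 1 := by simpa using hxB
    have h2 : ‖g y‖ ≤ 1 := by simpa using hgB y hy
    calc ‖x - g y‖ ≤ ‖x‖ + ‖g y‖ := norm_sub_le _ _
      _ ≤ 2 := by linarith
  have key : ‖S x - S (g y)‖ ^ 2 < ε ^ 2 := by
    have e1 : ‖S x - S (g y)‖ ^ 2
        = RCLike.re (⟪(adjoint S ∘L S) (x - g y), x - g y⟫_ℂ) := by
      rw [← map_sub S]
      rw [ContinuousLinearMap.comp_apply, ContinuousLinearMap.adjoint_inner_left]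
      rw [inner_self_eq_norm_sq (𝕜 := ℂ)]
    have e2 : RCLike.re (⟪(adjoint S ∘L S) (x - g y), x - g y⟫_ℂ)
        ≤ ‖(adjoint S ∘L S) (x - g y)‖ * ‖x - g y‖ := by
      calc RCLike.re (⟪(adjoint S ∘L S) (x - g y), x - g y⟫_ℂ)
          ≤ ‖(⟪(adjoint S ∘L S) (x - g y), x - g y⟫_ℂ)‖ := RCLike.re_le_norm _
        _ ≤ ‖(adjoint S ∘L S) (x - g y)‖ * ‖x - g y‖ := norm_inner_le_norm _ _
    have e3 : ‖(adjoint S ∘L S) (x - g y)‖ * ‖x - g y‖ < ε ^ 2 := by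
      have hn : ‖(adjoint S ∘L S) (x - g y)‖ < ε ^ 2 / 2 := by
        rwa [← map_sub] at hxy'
      calc ‖(adjoint S ∘L S) (x - g y)‖ * ‖x - g y‖
          ≤ ‖(adjoint S ∘L S) (x - g y)‖ * 2 :=
            mul_le_mul_of_nonneg_left hx2 (norm_nonneg _)
        _ < (ε ^ 2 / 2) * 2 := by
            exact mul_lt_mul_of_pos_right hn (by norm_num)
        _ = ε ^ 2 := by ring
    calc ‖S x - S (g y)‖ ^ 2 = _ := e1
      _ ≤ _ := e2
      _ < ε ^ 2 := e3
  have : ‖S x - S (g y)‖ < ε := by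
    have := lt_of_pow_lt_pow_left₀ 2 (le_of_lt hε) key
    exact this
  exact Set.mem_iUnion₂.2 ⟨S (g y), ⟨g y, ⟨y, hy, rfl⟩, rfl⟩, by
    simpa [Metric.mem_ball, dist_eq_norm] using this⟩

/-- The adjoint of a compact operator is compact. -/
lemma isCompactOperator_adjoint (A : E →L[ℂ] F) (h : IsCompactOperator ⇑A) :
    IsCompactOperator ⇑(adjoint A) := by
  apply isCompactOperator_of_adjoint_comp
  rw [adjoint_adjoint]
  have := h.comp_clm (adjoint A)
  rwa [← ContinuousLinearMap.coe_comp'] at this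

variable (U : Submodule ℂ E) [CompleteSpace U]

lemma adjoint_sandwich (A : U →L[ℂ] U) :
    adjoint (U.subtypeL ∘L A ∘L U.orthogonalProjectionOnto)
      = U.subtypeL ∘L adjoint A ∘L U.orthogonalProjectionOnto := by
  rw [adjoint_comp, adjoint_comp, Submodule.adjoint_subtypeL,
    Submodule.adjoint_orthogonalProjectionOnto, ← ContinuousLinearMap.comp_assoc]

lemma sandwich_comp (A B : U →L[ℂ] U) :
    U.subtypeL ∘L (A ∘L B) ∘L U.orthogonalProjectionOnto
      = (U.subtypeL ∘L A ∘L U.orthogonalProjectionOnto)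
          ∘L (U.subtypeL ∘L B ∘L U.orthogonalProjectionOnto) := by
  ext x
  simp [ContinuousLinearMap.coe_comp', Function.comp,
    Submodule.orthogonalProjectionOnto_mem_subspace_eq_self]

lemma isCompactOperator_sandwich_iff (A : U →L[ℂ] U) :
    IsCompactOperator ⇑A ↔
      IsCompactOperator ⇑(U.subtypeL ∘L A ∘L U.orthogonalProjectionOnto) := by
  constructor
  · intro hA
    have := (hA.comp_clm (U.orthogonalProjectionOnto)).clm_comp U.subtypeL
    rwa [show (⇑U.subtypeL ∘ (⇑A ∘ ⇑(U.orthogonalProjectionOnto)))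
      = ⇑(U.subtypeL ∘L A ∘L U.orthogonalProjectionOnto) by
        simp [ContinuousLinearMap.coe_comp']] at this
  · intro hS
    have := (hS.comp_clm U.subtypeL).clm_comp
      (U.orthogonalProjectionOnto : E →L[ℂ] U)
    rwa [show (⇑(U.orthogonalProjectionOnto)
        ∘ (⇑(U.subtypeL ∘L A ∘L U.orthogonalProjectionOnto) ∘ ⇑U.subtypeL)) = ⇑A by
      funext x
      simp [ContinuousLinearMap.coe_comp', Function.comp,
        Submodule.orthogonalProjectionOnto_mem_subspace_eq_self]] at this

lemma sandwich_clmRestrict (T : E →L[ℂ] E) (h : ∀ x ∈ U, T x ∈ U) :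
    U.subtypeL ∘L clmRestrict T U h ∘L U.orthogonalProjectionOnto
      = T ∘L (U.subtypeL ∘L U.orthogonalProjectionOnto) := by
  ext x
  simp [ContinuousLinearMap.coe_comp', Function.comp, clmRestrict]
  rfl

end AuxLemmas

/-- For an essentially normal commuting tuple `T` with `T₁H+⋯+T_dH` closed of finite
codimension, and a nontrivial closed invariant subspace `M` with projection `P`,
the restricted tuple on `M` is essentially normal iff each `[P, T k]` is compact. -/
theorem stmt4 {H : Type*} [NormedAddCommGroup H] [InnerProductSpace ℂ H] [CompleteSpace H]
    {d : ℕ} (T : Fin d → H →L[ℂ] H)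
    (hcomm : ∀ j k, T j ∘L T k = T k ∘L T j)
    (hEN : EssNormal T)
    (hcl : IsClosed ((⨆ k, LinearMap.range (T k : H →ₗ[ℂ] H) : Submodule ℂ H) : Set H))
    (hfd : FiniteDimensional ℂ ↥((⨆ k, LinearMap.range (T k : H →ₗ[ℂ] H) : Submodule ℂ H)ᗮ))
    (M : Submodule ℂ H) (hMc : IsClosed (M : Set H))
    (hM0 : M ≠ ⊥) (hM1 : M ≠ ⊤)
    (hinv : ∀ k, ∀ x ∈ M, T k x ∈ M) :
    EssNormalOn T M hMc hinv ↔
      ∀ k, IsCompactOperator ⇑(projOf M hMc ∘L T k - T k ∘L projOf M hMc) := by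
  haveI : CompleteSpace M := hMc.completeSpace_coe
  have hPdef : projOf M hMc = M.subtypeL ∘L M.orthogonalProjectionOnto := rfl
  set P : H →L[ℂ] H := projOf M hMc with hP
  -- basic facts about P
  have hPmem : ∀ x ∈ M, P x = x := fun x hx => by
    simp only [hP, hPdef, ContinuousLinearMap.coe_comp', Function.comp_apply,
      Submodule.coe_subtypeL', Submodule.coe_subtype]
    exact M.starProjection_eq_self_iff.2 hx
  have hPmem' : ∀ x : H, P x ∈ M := fun x => by
    simp only [hP, hPdef, ContinuousLinearMap.coe_comp', Function.comp_apply,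
      Submodule.coe_subtypeL', Submodule.coe_subtype]
    exact Submodule.coe_mem _
  have hPidem : ∀ x, P (P x) = P x := fun x => hPmem _ (hPmem' x)
  have hPT : ∀ k x, P (T k (P x)) = T k (P x) :=
    fun k x => hPmem _ (hinv k _ (hPmem' x))
  have hPadj : adjoint P = P := by
    rw [hPdef, ← ContinuousLinearMap.star_eq_adjoint]
    exact (isSelfAdjoint_starProjection M)
  -- the restricted operators
  set A : Fin d → M →L[ℂ] M := fun k => clmRestrict (T k) M (hinv k) with hA
  have hB : ∀ k, M.subtypeL ∘L A k ∘L M.orthogonalProjectionOnto = T k ∘L P := by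
    intro k
    rw [hA, sandwich_clmRestrict, hPdef]
  -- sandwich of the self-commutators of the restriction
  have hsand : ∀ j k,
      M.subtypeL ∘L (A j ∘L adjoint (A k) - adjoint (A k) ∘L A j)
          ∘L M.orthogonalProjectionOnto
        = (T j ∘L P) ∘L adjoint (T k ∘L P) - adjoint (T k ∘L P) ∘L (T j ∘L P) := by
    intro j k
    have h1 : M.subtypeL ∘L (A j ∘L adjoint (A k) - adjoint (A k) ∘L A j)
          ∘L M.orthogonalProjectionOnto
        = M.subtypeL ∘L (A j ∘L adjoint (A k)) ∘L M.orthogonalProjectionOnto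
          - M.subtypeL ∘L (adjoint (A k) ∘L A j) ∘L M.orthogonalProjectionOnto := by
      rw [ContinuousLinearMap.sub_comp, ContinuousLinearMap.comp_sub]
    rw [h1, sandwich_comp, sandwich_comp, ← adjoint_sandwich, hB j, hB k]
  -- unfold EssNormalOn
  have hLHS : EssNormalOn T M hMc hinv ↔
      ∀ j k, IsCompactOperator
        ⇑((T j ∘L P) ∘L adjoint (T k ∘L P) - adjoint (T k ∘L P) ∘L (T j ∘L P)) := by
    unfold EssNormalOn EssNormal
    constructor
    · intro h j k
      have := (isCompactOperator_sandwich_iff M _).1 (h j k)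
      rwa [hsand] at this
    · intro h j k
      apply (isCompactOperator_sandwich_iff M _).2
      rw [hsand]
      exact h j k
  rw [hLHS]
  -- adjoint of T k ∘L P
  have hadjTP : ∀ k, adjoint (T k ∘L P) = P ∘L adjoint (T k) := by
    intro k
    rw [adjoint_comp, hPadj]
  constructor
  · -- restriction essentially normal → commutators compact
    intro h k
    set S : H →L[ℂ] H := (1 - P) ∘L adjoint (T k) ∘L P with hS
    have hadj1P : adjoint (1 - P) = 1 - P := by
      rw [map_sub, hPadj, ← ContinuousLinearMap.star_eq_adjoint, star_one]
    have hadjS : adjoint S = P ∘L T k ∘L (1 - P) := by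
      rw [hS, adjoint_comp, adjoint_comp, hadj1P, adjoint_adjoint, hPadj,
        ← ContinuousLinearMap.comp_assoc]
    have hGoalEq : adjoint S = P ∘L T k - T k ∘L P := by
      rw [hadjS]
      ext x
      simp only [ContinuousLinearMap.coe_comp', ContinuousLinearMap.coe_sub',
        Function.comp_apply, Pi.sub_apply, ContinuousLinearMap.one_apply,
        ContinuousLinearMap.sub_apply, map_sub, hPT]
    -- the key identity
    have I5 : adjoint S ∘L S
        = P ∘L (T k ∘L adjoint (T k) - adjoint (T k) ∘L T k) ∘L P
          - P ∘L ((T k ∘L P) ∘L adjoint (T k ∘L P)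
              - adjoint (T k ∘L P) ∘L (T k ∘L P)) ∘L P := by
      rw [hadjS, hadjTP, hS]
      ext x
      simp only [ContinuousLinearMap.coe_comp', ContinuousLinearMap.coe_sub',
        Function.comp_apply, Pi.sub_apply, ContinuousLinearMap.one_apply,
        ContinuousLinearMap.sub_apply, map_sub, hPidem, hPT]
      abel
    have hc1 : IsCompactOperator
        ⇑(P ∘L (T k ∘L adjoint (T k) - adjoint (T k) ∘L T k) ∘L P) := by
      have := ((hEN k k).comp_clm P).clm_comp P
      rwa [← ContinuousLinearMap.coe_comp', ← ContinuousLinearMap.coe_comp'] at this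
    have hc2 : IsCompactOperator
        ⇑(P ∘L ((T k ∘L P) ∘L adjoint (T k ∘L P)
            - adjoint (T k ∘L P) ∘L (T k ∘L P)) ∘L P) := by
      have := ((h k k).comp_clm P).clm_comp P
      rwa [← ContinuousLinearMap.coe_comp', ← ContinuousLinearMap.coe_comp'] at this
    have hSS : IsCompactOperator ⇑(adjoint S ∘L S) := by
      rw [I5, ContinuousLinearMap.coe_sub']
      exact hc1.sub hc2
    have hScompact : IsCompactOperator ⇑S := isCompactOperator_of_adjoint_comp S hSS
    have := isCompactOperator_adjoint S hScompact
    rwa [hGoalEq] at this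
  · -- commutators compact → restriction essentially normal
    intro h j k
    have hDadj : adjoint (P ∘L T k - T k ∘L P) = adjoint (T k) ∘L P - P ∘L adjoint (T k) := by
      rw [map_sub, adjoint_comp, adjoint_comp, hPadj]
    have hDc : IsCompactOperator ⇑(adjoint (P ∘L T k - T k ∘L P)) :=
      isCompactOperator_adjoint _ (h k)
    -- key identity
    have I4 : (T j ∘L P) ∘L adjoint (T k ∘L P) - adjoint (T k ∘L P) ∘L (T j ∘L P)
        = (T j ∘L adjoint (T k) - adjoint (T k) ∘L T j) ∘L P
          - T j ∘L adjoint (P ∘L T k - T k ∘L P)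
          + adjoint (P ∘L T k - T k ∘L P) ∘L (T j ∘L P) := by
      rw [hadjTP, hDadj]
      ext x
      simp only [ContinuousLinearMap.coe_comp', ContinuousLinearMap.coe_sub',
        ContinuousLinearMap.coe_add', Function.comp_apply, Pi.sub_apply, Pi.add_apply,
        ContinuousLinearMap.sub_apply, ContinuousLinearMap.add_apply, map_sub,
        hPidem, hPT]
      abel
    rw [I4]
    have t1 : IsCompactOperator
        ⇑((T j ∘L adjoint (T k) - adjoint (T k) ∘L T j) ∘L P) := by
      have := (hEN j k).comp_clm P
      rwa [← ContinuousLinearMap.coe_comp'] at this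
    have t2 : IsCompactOperator ⇑(T j ∘L adjoint (P ∘L T k - T k ∘L P)) := by
      have := hDc.clm_comp (T j)
      rwa [← ContinuousLinearMap.coe_comp'] at this
    have t3 : IsCompactOperator
        ⇑(adjoint (P ∘L T k - T k ∘L P) ∘L (T j ∘L P)) := by
      have := hDc.comp_clm (T j ∘L P)
      rwa [← ContinuousLinearMap.coe_comp'] at this
    rw [ContinuousLinearMap.coe_add', ContinuousLinearMap.coe_sub']
    exact (t1.sub t2).add t3
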